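/- arXiv:1812.10351 — 7 statements merged into one kernel-verified Lean document; each statement's English description precedes it below -/
import Mathlib

section
/- For every positive integer n, the sum over k from 0 to n-1 of (11k^2+13k+4)·β_k is divisible by 2n^2, where β_k = Σ_{j=0}^{k} C(k,j)^2·C(k+j,j). -/
/-!
Zeilberger's algorithm gives the three-term recurrence
`(m+2)² β_{m+2} = (11m² + 33m + 25) β_{m+1} + (m+1)² β_m`, with a polynomial certificate.
With it the sum telescopes: `∑_{k ≤ n} (11k² + 13k + 4) β_k = (n+1)² (β_{n+1} + β_n)`.
Finally every `β_k` is odd, because for `j > 0` the summand contains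
`C(k,j) C(k+j,j) = C(k+j,2j) C(2j,j)` and the central binomial coefficient `C(2j,j)` is even,
so `β_{n+1} + β_n` is even.
-/

def apheryBeta (k : ℕ) : ℕ := ∑ j ∈ Finset.range (k + 1), (Nat.choose k j) ^ 2 * Nat.choose (k + j) j

open Finset

theorem Nat.cast_choose_succ_right_mul {R : Type*} [CommRing R] (n k : ℕ) :
    (n.choose (k + 1) : R) * (k + 1) = n.choose k * (n - k) := by
  rcases le_or_gt k n with hk | hk
  · rw [← Nat.cast_sub hk]
    exact_mod_cast congrArg (Nat.cast : ℕ → R) (Nat.choose_succ_right_eq n k)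
  · simp [Nat.choose_eq_zero_of_lt hk, Nat.choose_eq_zero_of_lt (hk.trans k.lt_succ_self)]

theorem Nat.cast_choose_mul_succ {R : Type*} [CommRing R] (n k : ℕ) :
    (n.choose k : R) * (n + 1) = (n + 1).choose k * (n + 1 - k) := by
  rcases le_or_gt k (n + 1) with hk | hk
  · rw [← Nat.cast_add_one, ← Nat.cast_sub hk]
    exact_mod_cast congrArg (Nat.cast : ℕ → R) (Nat.choose_mul_succ_eq n k)
  · simp [Nat.choose_eq_zero_of_lt hk, Nat.choose_eq_zero_of_lt (n.lt_succ_self.trans hk)]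

def apheryTerm (n j : ℕ) : ℕ := n.choose j ^ 2 * (n + j).choose j

theorem apheryBeta_eq_sum_apheryTerm {n N : ℕ} (h : n ≤ N) :
    apheryBeta n = ∑ j ∈ range (N + 1), apheryTerm n j := by
  refine sum_subset (range_subset_range.2 (by omega)) fun j hj hjn => ?_
  simp only [mem_range, not_lt] at hj hjn
  simp [Nat.choose_eq_zero_of_lt (show n < j by omega)]

theorem apheryTerm_succ_right (n j : ℕ) :
    (apheryTerm n (j + 1) : ℤ) * (j + 1) ^ 3 = apheryTerm n j * ((n : ℤ) - j) ^ 2 * (n + j + 1) := by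
  have h₁ := Nat.cast_choose_succ_right_mul (R := ℤ) n j
  have h₂ : ((n + j + 1).choose (j + 1) : ℤ) * (j + 1) = (n + j + 1) * (n + j).choose j := by
    exact_mod_cast (Nat.add_one_mul_choose_eq (n + j) j).symm
  simp only [apheryTerm, ← add_assoc]
  push_cast
  linear_combination (↑(n.choose (j + 1)) * (j + 1) + n.choose j * (n - j)) *
    ((n + j + 1).choose (j + 1) : ℤ) * (j + 1) * h₁ + (n.choose j * ((n : ℤ) - j)) ^ 2 * h₂

theorem apheryTerm_succ_succ (n j : ℕ) :
    (apheryTerm (n + 1) (j + 1) : ℤ) * (j + 1) ^ 3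
      = (n + 1) * (n + j + 1) * (n + j + 2) * apheryTerm n j := by
  have h₁ : ((n + 1).choose (j + 1) : ℤ) * (j + 1) = (n + 1) * n.choose j := by
    exact_mod_cast (Nat.add_one_mul_choose_eq n j).symm
  have h₂ : ((n + j + 2).choose (j + 1) : ℤ) * (j + 1) = (n + j + 2) * (n + j + 1).choose j := by
    exact_mod_cast (Nat.add_one_mul_choose_eq (n + j + 1) j).symm
  have h₃ := Nat.cast_choose_mul_succ (R := ℤ) (n + j) j
  refine mul_right_cancel₀ (show (n + 1 : ℤ) ≠ 0 by positivity) ?_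
  simp only [apheryTerm, show n + 1 + (j + 1) = n + j + 2 by ring]
  push_cast at h₃ ⊢
  linear_combination
    (((n + 1).choose (j + 1) : ℤ) * (j + 1) + (n + 1) * n.choose j) *
        ((n + j + 2).choose (j + 1) : ℤ) * (j + 1) * (n + 1) * h₁
      + ((n + 1) * n.choose j : ℤ) ^ 2 * (n + 1) * h₂
      - ((n : ℤ) + 1) ^ 2 * (n + j + 2) * n.choose j ^ 2 * h₃

theorem apheryTerm_mul_succ (n j : ℕ) :
    (apheryTerm n j : ℤ) * (n + 1) * (n + j + 1) = apheryTerm (n + 1) j * ((n : ℤ) + 1 - j) ^ 2 := by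
  have h₁ := Nat.cast_choose_mul_succ (R := ℤ) n j
  have h₂ := Nat.cast_choose_mul_succ (R := ℤ) (n + j) j
  refine mul_right_cancel₀ (show (n + 1 : ℤ) ≠ 0 by positivity) ?_
  simp only [apheryTerm, show n + 1 + j = n + j + 1 by ring]
  push_cast at h₂ ⊢
  linear_combination
    ((n.choose j : ℤ) * (n + 1) + (n + 1).choose j * ((n : ℤ) + 1 - j)) *
        ((n + j).choose j : ℤ) * (n + j + 1) * h₁
      + ((n + 1).choose j * ((n : ℤ) + 1 - j)) ^ 2 * h₂

-- Zeilberger's certificate for the recurrence of `apheryBeta`.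
def apheryCert (m j : ℕ) : ℤ :=
  apheryTerm (m + 1) j * ((j : ℤ) ^ 2 + (6 * m + 9) * j - (11 * m ^ 2 + 31 * m + 22))

theorem apheryTerm_telescope (m i : ℕ) :
    ((m : ℤ) + 2) ^ 2 * apheryTerm (m + 2) (i + 1)
      - (11 * (m : ℤ) ^ 2 + 33 * m + 25) * apheryTerm (m + 1) (i + 1)
      - ((m : ℤ) + 1) ^ 2 * apheryTerm m (i + 1)
      = apheryCert m (i + 1) - apheryCert m i := by
  have hA := apheryTerm_succ_right (m + 1) i
  have hB := apheryTerm_succ_succ (m + 1) i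
  have hC := apheryTerm_mul_succ m (i + 1)
  -- All five terms are rational multiples of `apheryTerm (m + 1) i`; clear the denominators.
  refine mul_left_cancel₀
    (show ((i : ℤ) + 1) ^ 3 * (m + 1) * (m + i + 2) ≠ 0 by positivity) ?_
  simp only [apheryCert]
  push_cast at hA hB hC ⊢
  linear_combination
    ((m : ℤ) + 2) ^ 2 * (m + 1) * (m + i + 2) * hB
      + (-(11 * (m : ℤ) ^ 2 + 33 * m + 25 + (((i : ℤ) + 1) ^ 2 + (6 * m + 9) * (i + 1)
          - (11 * m ^ 2 + 31 * m + 22))) * (m + 1) * (m + i + 2)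
        - ((m : ℤ) + 1) ^ 2 * ((m : ℤ) - i) ^ 2) * hA
      - ((m : ℤ) + 1) ^ 2 * ((i : ℤ) + 1) ^ 3 * hC

theorem apheryBeta_recurrence (m : ℕ) :
    (m + 2) ^ 2 * apheryBeta (m + 2)
      = (11 * m ^ 2 + 33 * m + 25) * apheryBeta (m + 1) + (m + 1) ^ 2 * apheryBeta m := by
  have htel : ∑ j ∈ range (m + 3), (((m : ℤ) + 2) ^ 2 * apheryTerm (m + 2) j
      - (11 * (m : ℤ) ^ 2 + 33 * m + 25) * apheryTerm (m + 1) j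
      - ((m : ℤ) + 1) ^ 2 * apheryTerm m j) = apheryCert m (m + 2) := by
    rw [sum_range_succ', sum_congr rfl fun i _ => apheryTerm_telescope m i, sum_range_sub]
    simp [apheryTerm, apheryCert]
    ring
  have hcert : apheryCert m (m + 2) = 0 := by
    simp [apheryCert, apheryTerm]
  rw [hcert, sum_sub_distrib, sum_sub_distrib, ← mul_sum, ← mul_sum, ← mul_sum] at htel
  simp only [← Nat.cast_sum, ← apheryBeta_eq_sum_apheryTerm le_rfl,
    ← apheryBeta_eq_sum_apheryTerm (show m + 1 ≤ m + 2 by omega),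
    ← apheryBeta_eq_sum_apheryTerm (show m ≤ m + 2 by omega)] at htel
  zify
  linear_combination htel

theorem sum_mul_apheryBeta (n : ℕ) :
    ∑ k ∈ range (n + 1), (11 * k ^ 2 + 13 * k + 4) * apheryBeta k
      = (n + 1) ^ 2 * (apheryBeta (n + 1) + apheryBeta n) := by
  induction n with
  | zero => decide
  | succ n ih =>
    rw [sum_range_succ, ih]
    linear_combination (apheryBeta_recurrence n).symm

theorem two_dvd_apheryTerm (n : ℕ) {j : ℕ} (hj : 0 < j) : 2 ∣ apheryTerm n j := by
  rcases le_or_gt j n with hjn | hjn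
  · have h := Nat.choose_mul (n := n + j) (k := 2 * j) (s := j) (by omega)
    rw [show n + j - j = n by omega, show 2 * j - j = j by omega] at h
    have hcentral : 2 ∣ (2 * j).choose j := Nat.two_dvd_centralBinom_of_one_le hj
    rw [apheryTerm, sq, mul_assoc, mul_comm (n.choose j) ((n + j).choose j), ← h]
    exact dvd_mul_of_dvd_right (dvd_mul_of_dvd_right hcentral _) _
  · simp [apheryTerm, Nat.choose_eq_zero_of_lt hjn]

theorem odd_apheryBeta (n : ℕ) : Odd (apheryBeta n) := by
  rw [apheryBeta_eq_sum_apheryTerm le_rfl, sum_range_succ']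
  refine Even.add_odd ?_ (by simp [apheryTerm])
  exact even_iff_two_dvd.2 (dvd_sum fun j _ => two_dvd_apheryTerm n j.succ_pos)

theorem stmt0_general (n : ℕ) :
    (2 * (n : ℤ) ^ 2) ∣
      ∑ k ∈ Finset.range n, (11 * (k : ℤ) ^ 2 + 13 * k + 4) * (apheryBeta k : ℤ) := by
  rcases n with _ | m
  · simp
  have hdvd : 2 * (m + 1) ^ 2 ∣ ∑ k ∈ range (m + 1), (11 * k ^ 2 + 13 * k + 4) * apheryBeta k := by
    rw [sum_mul_apheryBeta, mul_comm 2]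
    exact mul_dvd_mul_left _
      ((odd_apheryBeta (m + 1)).add_odd (odd_apheryBeta m)).two_dvd
  exact_mod_cast hdvd

theorem stmt0 (n : ℕ) (hn : 0 < n) :
    (2 * (n : ℤ) ^ 2) ∣
      ∑ k ∈ Finset.range n, (11 * (k : ℤ) ^ 2 + 13 * k + 4) * (apheryBeta k : ℤ) :=
  stmt0_general n
end

section
/- For every positive integer n, Σ_{k=0}^{n-1} (11k^2+13k+4)·β_k = -Σ_{k=0}^{n-1} C(n,k+1)^2·C(n+k,k)·(n^3 - n^2 k - n k^2 - 2n^2 - 5nk + k^2 - 4n + 2k + 1), where β_k = Σ_{j=0}^{k} C(k,j)^2·C(k+j,j). -/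
/-!
Creative telescoping. With `F n k = C(n,k)^2 C(n+k,k)`, the functions `kernel` and `certificate`
below (found by Zeilberger's algorithm) satisfy, for `k ≤ n`,
`(11n² + 13n + 4) F n k + kernel (n+1) k - kernel n k = certificate n (k+1) - certificate n k`,
which is checked by clearing the denominators of the ratios of consecutive binomial
coefficients. Summing over `k ≤ n` telescopes the right-hand side to zero, so
`S n = ∑_{k<n} kernel n k` satisfies `S n - S (n+1) = (11n² + 13n + 4) β_n` and `S 0 = 0`.
-/

namespace Aphery

open Finset

def kernel (n k : ℕ) : ℤ :=
  ((n.choose (k + 1) : ℤ)) ^ 2 * ((n + k).choose k : ℤ) *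
    ((n : ℤ) ^ 3 - (n : ℤ) ^ 2 * k - (n : ℤ) * (k : ℤ) ^ 2 - 2 * (n : ℤ) ^ 2
      - 5 * (n : ℤ) * k + (k : ℤ) ^ 2 - 4 * n + 2 * k + 1)

def certificate (n k : ℕ) : ℤ :=
  (n.choose k : ℤ) ^ 2 * ((n + k).choose k : ℤ) * k * (-(k : ℤ) ^ 2 + (3 * n - 2) * k + 2 * n)

lemma kernel_self (n : ℕ) : kernel n n = 0 := by
  simp [kernel, Nat.choose_succ_self]

lemma certificate_zero (n : ℕ) : certificate n 0 = 0 := by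
  simp [certificate]

lemma certificate_succ_self (n : ℕ) : certificate n (n + 1) = 0 := by
  simp [certificate, Nat.choose_succ_self]

lemma cast_apheryBeta (n : ℕ) :
    (apheryBeta n : ℤ) = ∑ k ∈ range (n + 1), (n.choose k : ℤ) ^ 2 * ((n + k).choose k : ℤ) := by
  simp [apheryBeta]

lemma creative_telescoping {n k : ℕ} (h : k ≤ n) :
    (11 * (n : ℤ) ^ 2 + 13 * n + 4) * ((n.choose k : ℤ) ^ 2 * ((n + k).choose k : ℤ))
      + kernel (n + 1) k - kernel n k = certificate n (k + 1) - certificate n k := by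
  have h1 : (n.choose (k + 1) : ℤ) * (k + 1) = n.choose k * (n - k) := by
    have := Nat.choose_succ_right_eq n k
    zify [h] at this
    exact this
  have h2 : ((n + 1).choose (k + 1) : ℤ) * (k + 1) = (n + 1) * n.choose k := by
    exact_mod_cast (Nat.add_one_mul_choose_eq n k).symm
  have h3 : ((n + k + 1).choose k : ℤ) * (n + 1) = (n + k + 1) * (n + k).choose k := by
    have := Nat.choose_mul_succ_eq (n + k) k
    rw [show n + k + 1 - k = n + 1 by omega] at this
    zify at this
    linear_combination -this
  have h4 : ((n + k + 1).choose (k + 1) : ℤ) * (k + 1) = (n + k + 1) * (n + k).choose k := by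
    exact_mod_cast (Nat.add_one_mul_choose_eq (n + k) k).symm
  refine mul_left_cancel₀ (by positivity : ((k : ℤ) + 1) ^ 3 * (n + 1) ≠ 0) ?_
  simp only [kernel, certificate]
  rw [show n + 1 + k = n + k + 1 by omega, show n + (k + 1) = n + k + 1 by omega]
  push_cast
  set P₁ : ℤ := (n + 1) ^ 3 - (n + 1) ^ 2 * k - (n + 1) * k ^ 2 - 2 * (n + 1) ^ 2
    - 5 * (n + 1) * k + k ^ 2 - 4 * (n + 1) + 2 * k + 1
  set P₀ : ℤ := n ^ 3 - n ^ 2 * k - n * k ^ 2 - 2 * n ^ 2 - 5 * n * k + k ^ 2 - 4 * n + 2 * k + 1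
  set Q : ℤ := -(k + 1) ^ 2 + (3 * n - 2) * (k + 1) + 2 * n
  linear_combination
    (k + 1) * (n + 1) * P₁ * ((n + 1).choose (k + 1) * (k + 1) + (n + 1) * n.choose k)
        * (n + k + 1).choose k * h2
      + (k + 1) * (n + 1) ^ 2 * P₁ * n.choose k ^ 2 * h3
      - (k + 1) * (n + 1) * ((n + k).choose k * P₀ + (k + 1) * Q * (n + k + 1).choose (k + 1))
        * (n.choose (k + 1) * (k + 1) + n.choose k * (n - k)) * h1
      - (k + 1) * (n + 1) * Q * n.choose k ^ 2 * (n - k) ^ 2 * h4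

lemma sum_kernel_sub_sum_kernel_succ (n : ℕ) :
    ∑ k ∈ range n, kernel n k - ∑ k ∈ range (n + 1), kernel (n + 1) k
      = (11 * (n : ℤ) ^ 2 + 13 * n + 4) * apheryBeta n := by
  have htel : ∑ k ∈ range (n + 1), (certificate n (k + 1) - certificate n k) = 0 := by
    rw [sum_range_sub, certificate_succ_self, certificate_zero, sub_zero]
  rw [← sum_congr rfl fun k hk => creative_telescoping (Nat.lt_succ_iff.mp (mem_range.mp hk)),
    sum_sub_distrib, sum_add_distrib, ← mul_sum, ← cast_apheryBeta, sum_range_succ (kernel n),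
    kernel_self] at htel
  linarith

lemma sum_apheryBeta_eq_neg_sum_kernel (n : ℕ) :
    ∑ k ∈ range n, (11 * (k : ℤ) ^ 2 + 13 * k + 4) * (apheryBeta k : ℤ)
      = -∑ k ∈ range n, kernel n k := by
  induction n with
  | zero => simp
  | succ m ih =>
    rw [sum_range_succ, ih, ← sum_kernel_sub_sum_kernel_succ]
    ring

end Aphery

theorem stmt3_general (n : ℕ) :
    ∑ k ∈ Finset.range n, (11 * (k : ℤ) ^ 2 + 13 * k + 4) * (apheryBeta k : ℤ) =
      -∑ k ∈ Finset.range n,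
        ((n.choose (k + 1) : ℤ)) ^ 2 * ((n + k).choose k : ℤ) *
          ((n : ℤ) ^ 3 - (n : ℤ) ^ 2 * k - (n : ℤ) * (k : ℤ) ^ 2 - 2 * (n : ℤ) ^ 2
            - 5 * (n : ℤ) * k + (k : ℤ) ^ 2 - 4 * n + 2 * k + 1) :=
  Aphery.sum_apheryBeta_eq_neg_sum_kernel n

theorem stmt3 (n : ℕ) (hn : 0 < n) :
    ∑ k ∈ Finset.range n, (11 * (k : ℤ) ^ 2 + 13 * k + 4) * (apheryBeta k : ℤ) =
      -∑ k ∈ Finset.range n,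
        ((n.choose (k + 1) : ℤ)) ^ 2 * ((n + k).choose k : ℤ) *
          ((n : ℤ) ^ 3 - (n : ℤ) ^ 2 * k - (n : ℤ) * (k : ℤ) ^ 2 - 2 * (n : ℤ) ^ 2
            - 5 * (n : ℤ) * k + (k : ℤ) ^ 2 - 4 * n + 2 * k + 1) :=
  stmt3_general n
end

section
/- For every positive even integer n, Σ_{k=0}^{n-1} C(n-1,k)·C(n+k,2k)·C(2k,k+1) ≡ 1 (mod 2). -/
/-!
Lucas's theorem for `p = 2`, one binary digit at a time, says
`C(n, k) ≡ C(n % 2, k % 2) * C(n / 2, k / 2) (mod 2)`. It shows that `C(2k, k + 1)` is odd only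
when `k + 1 = 2^a` with `a ≥ 1`, and for such `k` that `C(n - 1, k)` is odd iff `2^a ∣ n`, and
`C(n + k, 2k)` is then odd iff `2^(a+1) ∤ n`. So exactly one summand is odd: the one where `k + 1`
is the exact power of two dividing the even number `n`.
-/

namespace Nat

theorem odd_choose_iff {n k : ℕ} :
    Odd (n.choose k) ↔ k % 2 ≤ n % 2 ∧ Odd ((n / 2).choose (k / 2)) := by
  have h := (Choose.choose_modEq_choose_mod_mul_choose_div_nat (n := n) (k := k) (p := 2))
  rw [odd_iff, h, ← odd_iff, odd_mul, odd_iff]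
  rcases mod_two_eq_zero_or_one n with hn | hn <;>
    rcases mod_two_eq_zero_or_one k with hk | hk <;> simp [hn, hk]

theorem odd_choose_two_mul_iff {n k : ℕ} :
    Odd (n.choose (2 * k)) ↔ Odd ((n / 2).choose k) := by
  rw [odd_choose_iff]; simp

theorem odd_choose_two_mul_add_one_iff {n k : ℕ} :
    Odd (n.choose (2 * k + 1)) ↔ Odd n ∧ Odd ((n / 2).choose k) := by
  rw [odd_choose_iff, show (2 * k + 1) / 2 = k by omega, odd_iff (n := n)]
  exact and_congr_left' (by omega)

theorem odd_choose_two_pow_sub_one_iff {n : ℕ} (a : ℕ) :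
    Odd (n.choose (2 ^ a - 1)) ↔ 2 ^ a ∣ n + 1 := by
  induction a generalizing n with
  | zero => simp
  | succ a ih =>
    have h2a : 2 ^ (a + 1) - 1 = 2 * (2 ^ a - 1) + 1 := by
      have := Nat.one_le_two_pow (n := a); rw [pow_succ]; omega
    rw [h2a, odd_choose_two_mul_add_one_iff, ih]
    obtain ⟨q, rfl | rfl⟩ := even_or_odd' n
    · refine iff_of_false (fun h ↦ not_odd_iff_even.mpr (even_two_mul q) h.1) fun h ↦ ?_
      have : 2 ∣ 2 * q + 1 := (dvd_pow_self 2 a.succ_ne_zero).trans h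
      omega
    · rw [show (2 * q + 1) / 2 + 1 = q + 1 by omega, show 2 * q + 1 + 1 = 2 * (q + 1) by ring,
        pow_succ', Nat.mul_dvd_mul_iff_left two_pos]
      simp

theorem odd_choose_two_mul_add_one_succ_iff (k : ℕ) :
    Odd ((2 * k + 1).choose (k + 1)) ↔ ∃ b, k + 1 = 2 ^ b := by
  induction k using Nat.strong_induction_on with
  | h k ih =>
  rw [odd_choose_iff, show (2 * k + 1) / 2 = k by omega]
  simp only [show (k + 1) % 2 ≤ (2 * k + 1) % 2 by omega, true_and]
  obtain ⟨s, rfl | rfl⟩ := even_or_odd' k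
  · rw [show (2 * s + 1) / 2 = s by omega, ← centralBinom_eq_two_mul_choose]
    rcases s.eq_zero_or_pos with rfl | hs
    · simpa using ⟨0, rfl⟩
    refine iff_of_false (not_odd_iff_even.mpr ?_) ?_
    · exact even_iff_two_dvd.mpr (two_dvd_centralBinom_of_one_le hs)
    · rintro ⟨_ | b, hb⟩ <;> simp only [pow_zero, pow_succ] at hb <;> omega
  · rw [show (2 * s + 1 + 1) / 2 = s + 1 by omega, ih s (by omega)]
    constructor
    · rintro ⟨b, hb⟩
      exact ⟨b + 1, by rw [pow_succ]; omega⟩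
    · rintro ⟨_ | b, hb⟩
      · simp at hb
      · exact ⟨b, by rw [pow_succ] at hb; omega⟩

theorem odd_choose_two_mul_succ_iff (k : ℕ) :
    Odd ((2 * k).choose (k + 1)) ↔ ∃ a, 0 < a ∧ k + 1 = 2 ^ a := by
  obtain ⟨r, rfl | rfl⟩ := even_or_odd' k
  · refine iff_of_false (fun h ↦ ?_) ?_
    · have := (odd_choose_iff.mp h).1
      omega
    · rintro ⟨_ | a, ha, hr⟩
      · simp at ha
      · rw [pow_succ] at hr; omega
  · rw [odd_choose_iff, show 2 * (2 * r + 1) / 2 = 2 * r + 1 by omega,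
      show (2 * r + 1 + 1) / 2 = r + 1 by omega, odd_choose_two_mul_add_one_succ_iff]
    simp only [show (2 * r + 1 + 1) % 2 ≤ 2 * (2 * r + 1) % 2 by omega, true_and]
    constructor
    · rintro ⟨b, hb⟩
      exact ⟨b + 1, b.succ_pos, by rw [pow_succ]; omega⟩
    · rintro ⟨_ | a, ha, hr⟩
      · simp at ha
      · exact ⟨a, by rw [pow_succ] at hr; omega⟩

theorem odd_choose_add_two_pow_sub_one_iff {n a : ℕ} (ha : 0 < a) (hn : 2 ^ a ∣ n) :
    Odd ((n + (2 ^ a - 1)).choose (2 * (2 ^ a - 1))) ↔ ¬ 2 ^ (a + 1) ∣ n := by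
  obtain ⟨c, rfl⟩ := hn
  obtain ⟨b, rfl⟩ : ∃ b, a = b + 1 := ⟨a - 1, by omega⟩
  have hb : 0 < 2 ^ b := by positivity
  have half : (2 ^ (b + 1) * c + (2 ^ (b + 1) - 1)) / 2 + 1 = 2 ^ b * (c + 1) := by
    rw [pow_succ, mul_add, mul_one, mul_right_comm]; omega
  rw [odd_choose_two_mul_iff, odd_choose_two_pow_sub_one_iff, half, pow_succ 2 (b + 1),
    Nat.mul_dvd_mul_iff_left (by positivity), pow_succ, Nat.mul_dvd_mul_iff_left hb]
  omega

theorem two_pow_dvd_two_pow_mul_iff {a v m : ℕ} (hm : Odd m) : 2 ^ a ∣ 2 ^ v * m ↔ a ≤ v :=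
  ((Nat.coprime_two_left.mpr hm).pow_left a).dvd_mul_right.trans
    (Nat.pow_dvd_pow_iff_le_right (by norm_num))

end Nat

theorem odd_summand_iff {v m k : ℕ} (hv : 0 < v) (hm : Odd m) :
    Odd ((2 ^ v * m - 1).choose k * ((2 ^ v * m + k).choose (2 * k)) * ((2 * k).choose (k + 1)))
      ↔ k + 1 = 2 ^ v := by
  have hn : 1 ≤ 2 ^ v * m := Nat.mul_pos (by positivity) hm.pos
  rw [Nat.odd_mul, Nat.odd_mul, Nat.odd_choose_two_mul_succ_iff]
  constructor
  · rintro ⟨⟨h₁, h₂⟩, a, ha, hk⟩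
    obtain rfl : k = 2 ^ a - 1 := by omega
    rw [Nat.odd_choose_two_pow_sub_one_iff, Nat.sub_add_cancel hn] at h₁
    rw [Nat.odd_choose_add_two_pow_sub_one_iff ha h₁, Nat.two_pow_dvd_two_pow_mul_iff hm] at h₂
    rw [Nat.two_pow_dvd_two_pow_mul_iff hm] at h₁
    rw [hk, show a = v by omega]
  · intro hk
    obtain rfl : k = 2 ^ v - 1 := by omega
    have hdvd : 2 ^ v ∣ 2 ^ v * m := dvd_mul_right _ _
    refine ⟨⟨?_, ?_⟩, v, hv, hk⟩
    · rwa [Nat.odd_choose_two_pow_sub_one_iff, Nat.sub_add_cancel hn]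
    · rw [Nat.odd_choose_add_two_pow_sub_one_iff hv hdvd, Nat.two_pow_dvd_two_pow_mul_iff hm]
      omega

theorem stmt6 (n : ℕ) (hn : 0 < n) (hev : Even n) :
    (∑ k ∈ Finset.range n,
        (n - 1).choose k * ((n + k).choose (2 * k)) * ((2 * k).choose (k + 1))) ≡ 1 [MOD 2] := by
  obtain ⟨v, m, hm, rfl⟩ := Nat.exists_eq_two_pow_mul_odd hn.ne'
  have hv : 0 < v := by
    refine Nat.pos_of_ne_zero fun hv ↦ ?_
    subst hv
    rw [pow_zero, one_mul] at hev
    exact Nat.not_even_iff_odd.mpr hm hev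
  have hpow := Nat.one_le_two_pow (n := v)
  have hterm : ∀ k ∈ Finset.range (2 ^ v * m), (2 ^ v * m - 1).choose k *
      ((2 ^ v * m + k).choose (2 * k)) * ((2 * k).choose (k + 1)) % 2 =
        if k = 2 ^ v - 1 then 1 else 0 := by
    intro k _
    split_ifs with hk
    · exact Nat.odd_iff.mp ((odd_summand_iff hv hm).mpr (by omega))
    · exact Nat.even_iff.mp (Nat.not_odd_iff_even.mp fun h ↦ hk (by
        have := (odd_summand_iff hv hm).mp h; omega))
  have hmem : 2 ^ v - 1 ∈ Finset.range (2 ^ v * m) :=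
    Finset.mem_range.mpr ((Nat.sub_lt hpow one_pos).trans_le (Nat.le_mul_of_pos_right _ hm.pos))
  rw [Nat.ModEq, Finset.sum_nat_mod, Finset.sum_congr rfl hterm, Finset.sum_ite_eq',
    if_pos hmem]
end

section
/- For every positive integer n, Σ_{k=1}^{n} C(n,k)·(-1)^{k-1}·H_k/k = H_{n,2}, where H_k = Σ_{j=1}^{k} 1/j and H_{n,2} = Σ_{j=1}^{n} 1/j^2 (an identity of rational numbers). -/
def harmonic1 (n : ℕ) : ℚ := ∑ j ∈ Finset.Icc 1 n, (1 : ℚ) / j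

def harmonic2 (n : ℕ) : ℚ := ∑ j ∈ Finset.Icc 1 n, (1 : ℚ) / (j : ℚ) ^ 2

/-!
Pascal's rule in the form `C(n+1,k)/k = C(n,k)/k + C(n+1,k)/(n+1)` telescopes the left side
into `∑_{m ≤ n} T(m)/m` with `T(m) = ∑_k C(m,k) (-1)^(k-1) H_k`. Pascal's rule also turns
`T(m+1)` into the alternating binomial sum of the forward differences `H_{k+1} - H_k = 1/(k+1)`,
which is `1/(m+1)`. Hence `T(m) = 1/m` and the left side is `∑_{m ≤ n} 1/m²`.
-/

open Finset

section CommRing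

variable {R : Type*} [CommRing R]

theorem sum_range_choose_succ_mul_neg_one_pow_eq_neg_fwdDiff (g : ℕ → R) (m : ℕ) :
    ∑ i ∈ range (m + 2), ((m + 1).choose i : R) * (-1) ^ i * g i =
      -∑ i ∈ range (m + 1), (m.choose i : R) * (-1) ^ i * fwdDiff 1 g i := by
  have h := sum_choose_succ_mul (fun i _ => (-1 : R) ^ i * g i) m
  simp only [← mul_assoc] at h
  rw [h, ← sum_neg_distrib, ← sum_add_distrib]
  refine sum_congr rfl fun i _ => ?_
  simp only [fwdDiff]
  ring

theorem sum_Icc_choose_mul_neg_one_pow_sub_one {g : ℕ → R} (hg : g 0 = 0) (m : ℕ) :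
    ∑ k ∈ Icc 1 m, (m.choose k : R) * (-1) ^ (k - 1) * g k =
      -∑ k ∈ range (m + 1), (m.choose k : R) * (-1) ^ k * g k := by
  rw [sum_range_succ', hg, mul_zero, add_zero, ← sum_neg_distrib, ← Ico_add_one_right_eq_Icc,
    sum_Ico_eq_sum_range, Nat.add_sub_cancel]
  refine sum_congr rfl fun i _ => ?_
  rw [add_comm 1 i, Nat.add_sub_cancel, pow_succ]
  ring

end CommRing

section Field

variable {K : Type*} [Field K] [CharZero K]

theorem cast_choose_succ_div_eq_add (n : ℕ) {k : ℕ} (hk : 0 < k) :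
    ((n + 1).choose k : K) / k = (n.choose k : K) / k + ((n + 1).choose k : K) / (n + 1) := by
  have hk' : (k : K) ≠ 0 := Nat.cast_ne_zero.2 hk.ne'
  have hn : (n : K) + 1 ≠ 0 := Nat.cast_add_one_ne_zero n
  rcases le_or_gt k (n + 1) with hle | hlt
  · have h := Nat.choose_mul_succ_eq n k
    rw [← Nat.cast_inj (R := K)] at h
    push_cast [hle] at h
    field_simp
    linear_combination -h
  · simp [Nat.choose_eq_zero_of_lt hlt, Nat.choose_eq_zero_of_lt (Nat.lt_of_succ_lt hlt)]

theorem sum_Icc_choose_mul_neg_one_pow_div_eq_sum (f : ℕ → K) (n : ℕ) :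
    ∑ k ∈ Icc 1 n, (n.choose k : K) * (-1) ^ (k - 1) * f k / k =
      ∑ m ∈ Icc 1 n, (∑ k ∈ Icc 1 m, (m.choose k : K) * (-1) ^ (k - 1) * f k) / m := by
  induction n with
  | zero => simp
  | succ n ih =>
    rw [sum_Icc_succ_top (Nat.le_add_left 1 n)
      (fun m => (∑ k ∈ Icc 1 m, (m.choose k : K) * (-1) ^ (k - 1) * f k) / m), ← ih]
    calc ∑ k ∈ Icc 1 (n + 1), ((n + 1).choose k : K) * (-1) ^ (k - 1) * f k / k
        = ∑ k ∈ Icc 1 (n + 1), ((n.choose k : K) * (-1) ^ (k - 1) * f k / k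
            + ((n + 1).choose k : K) * (-1) ^ (k - 1) * f k / (n + 1)) := by
          refine sum_congr rfl fun k hk => ?_
          have h := cast_choose_succ_div_eq_add (K := K) n (mem_Icc.1 hk).1
          linear_combination ((-1) ^ (k - 1) * f k) * h
      _ = _ := by
          rw [sum_add_distrib, ← sum_div, sum_Icc_succ_top (Nat.le_add_left 1 n)
              (fun k => (n.choose k : K) * (-1) ^ (k - 1) * f k / k),
            Nat.choose_succ_self]
          push_cast
          ring

theorem sum_range_choose_mul_neg_one_pow_div_succ (m : ℕ) :
    ∑ i ∈ range (m + 1), (m.choose i : K) * (-1) ^ i / (i + 1) = 1 / (m + 1) := by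
  have hm : (m : K) + 1 ≠ 0 := Nat.cast_add_one_ne_zero m
  have halt : ∑ i ∈ range (m + 1), ((-1) ^ i * (m + 1).choose (i + 1) : K) = 1 := by
    have h := Int.alternating_sum_range_choose_of_ne (Nat.succ_ne_zero m)
    rw [sum_range_succ'] at h
    simp only [pow_succ, mul_neg_one, neg_mul, sum_neg_distrib, pow_zero, Nat.choose_zero_right,
      Nat.cast_one, mul_one] at h
    exact_mod_cast neg_add_eq_zero.1 h
  calc ∑ i ∈ range (m + 1), (m.choose i : K) * (-1) ^ i / (i + 1)
      = ∑ i ∈ range (m + 1), ((-1) ^ i * (m + 1).choose (i + 1) : K) / (m + 1) := by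
        refine sum_congr rfl fun i _ => ?_
        have h := Nat.add_one_mul_choose_eq m i
        rw [← Nat.cast_inj (R := K)] at h
        push_cast at h
        field_simp
        linear_combination h
    _ = 1 / (m + 1) := by rw [← sum_div, halt]

end Field

theorem harmonic1_eq_harmonic : harmonic1 = harmonic := by
  ext n
  simp [harmonic1, harmonic_eq_sum_Icc]

theorem sum_Icc_choose_mul_neg_one_pow_harmonic {m : ℕ} (hm : 0 < m) :
    ∑ k ∈ Icc 1 m, (m.choose k : ℚ) * (-1) ^ (k - 1) * harmonic k = 1 / m := by
  obtain ⟨m, rfl⟩ := Nat.exists_eq_add_of_lt hm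
  rw [sum_Icc_choose_mul_neg_one_pow_sub_one harmonic_zero, zero_add,
    sum_range_choose_succ_mul_neg_one_pow_eq_neg_fwdDiff, neg_neg]
  simp only [fwdDiff, harmonic_succ, add_sub_cancel_left, ← div_eq_mul_inv]
  push_cast
  exact sum_range_choose_mul_neg_one_pow_div_succ m

theorem stmt8_general (n : ℕ) :
    ∑ k ∈ Finset.Icc 1 n, (n.choose k : ℚ) * (-1) ^ (k - 1) * harmonic1 k / k =
      harmonic2 n := by
  rw [harmonic1_eq_harmonic, sum_Icc_choose_mul_neg_one_pow_div_eq_sum, harmonic2]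
  refine sum_congr rfl fun m hm => ?_
  rw [sum_Icc_choose_mul_neg_one_pow_harmonic (mem_Icc.1 hm).1]
  ring

theorem stmt8 (n : ℕ) (hn : 0 < n) :
    ∑ k ∈ Finset.Icc 1 n, (n.choose k : ℚ) * (-1) ^ (k - 1) * harmonic1 k / k =
      harmonic2 n :=
  stmt8_general n
end

section
/- For every prime p > 3, the p-adic valuation of the rational number H_{p-1} = Σ_{k=1}^{p-1} 1/k is at least 2 (Wolstenholme's theorem). -/
open Finset Nat

lemma coprime_mul_self_of_mem_Ico {p k : ℕ} (hp : p.Prime) (hk : k ∈ Ico 1 p) :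
    k.Coprime (p * p) := by
  rw [mem_Ico] at hk
  have := (Nat.coprime_of_lt_prime (by omega) hk.2 hp).symm
  exact this.mul_right this

namespace ZMod

lemma natCast_div_eq_mul_inv {n a b : ℕ} (hba : b ∣ a) (hb : b.Coprime n) :
    ((a / b : ℕ) : ZMod n) = a * (b : ZMod n)⁻¹ := by
  obtain ⟨c, rfl⟩ := hba
  rcases b.eq_zero_or_pos with rfl | hb0
  · simp
  rw [Nat.mul_div_cancel_left c hb0, Nat.cast_mul, mul_right_comm, coe_mul_inv_eq_one b hb,
    one_mul]

lemma inv_add_inv_of_isUnit {n : ℕ} {a b : ZMod n} (ha : IsUnit a) (hb : IsUnit b) :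
    a⁻¹ + b⁻¹ = (a + b) * (a⁻¹ * b⁻¹) := by
  linear_combination (-b⁻¹) * mul_inv_of_unit a ha + (-a⁻¹) * mul_inv_of_unit b hb

lemma map_inv_of_isUnit {n : ℕ} {K : Type*} [Field K] (f : ZMod n →+* K) {a : ZMod n}
    (ha : IsUnit a) : f a⁻¹ = (f a)⁻¹ :=
  eq_inv_of_mul_eq_one_right (by rw [← map_mul, mul_inv_of_unit a ha, map_one])

lemma natCast_mul_eq_zero_of_castHom_eq_zero {m n : ℕ} {x : ZMod (m * n)}
    (hx : castHom (dvd_mul_left n m) (ZMod n) x = 0) : (m : ZMod (m * n)) * x = 0 := by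
  rw [← intCast_zmod_cast x, map_intCast, intCast_zmod_eq_zero_iff_dvd] at hx
  obtain ⟨c, hc⟩ := hx
  rw [← intCast_zmod_cast x, hc, Int.cast_mul, Int.cast_natCast, ← mul_assoc, ← Nat.cast_mul,
    natCast_self, zero_mul]

lemma sum_range_natCast {n : ℕ} [NeZero n] {M : Type*} [AddCommMonoid M] (f : ZMod n → M) :
    ∑ k ∈ range n, f k = ∑ x, f x :=
  sum_nbij' Nat.cast val (fun _ _ => mem_univ _) (fun x _ => mem_range.2 x.val_lt)
    (fun _ hk => val_cast_of_lt (mem_range.1 hk)) (fun x _ => natCast_zmod_val x) (fun _ _ => rfl)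

lemma sum_Ico_inv_natCast_sq_eq_zero {p : ℕ} [Fact p.Prime] (hp : 3 < p) :
    ∑ k ∈ Ico 1 p, ((k : ZMod p)⁻¹) ^ 2 = 0 := by
  have hcard : 2 < Fintype.card (ZMod p) - 1 := by rw [card]; omega
  calc ∑ k ∈ Ico 1 p, ((k : ZMod p)⁻¹) ^ 2 = ∑ k ∈ range p, ((k : ZMod p)⁻¹) ^ 2 := by
        -- the extra term `k = 0` vanishes because `(0 : ZMod p)⁻¹ = 0`
        rw [range_eq_Ico, sum_eq_sum_Ico_succ_bot (show 0 < p by omega)]; simp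
    _ = ∑ x : ZMod p, x⁻¹ ^ 2 := sum_range_natCast (fun x => x⁻¹ ^ 2)
    _ = ∑ x : ZMod p, x ^ 2 := Equiv.sum_comp (Equiv.inv (ZMod p)) (· ^ 2)
    _ = 0 := FiniteField.sum_pow_lt_card_sub_one (K := ZMod p) 2 hcard

theorem sum_Ico_inv_natCast_eq_zero {p : ℕ} (hp : p.Prime) (h3 : 3 < p) :
    ∑ k ∈ Ico 1 p, (k : ZMod (p * p))⁻¹ = 0 := by
  have := Fact.mk hp
  have hunit : ∀ k ∈ Ico 1 p, IsUnit (k : ZMod (p * p)) := fun k hk =>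
    (isUnit_iff_coprime k _).2 (coprime_mul_self_of_mem_Ico hp hk)
  have hsub_mem : ∀ k ∈ Ico 1 p, p - k ∈ Ico 1 p := fun k hk => by
    rw [mem_Ico] at hk ⊢; omega
  have hpair : ∀ k ∈ Ico 1 p, (k : ZMod (p * p))⁻¹ + ((p - k : ℕ) : ZMod (p * p))⁻¹ =
      p * ((k : ZMod (p * p))⁻¹ * ((p - k : ℕ) : ZMod (p * p))⁻¹) := fun k hk => by
    rw [inv_add_inv_of_isUnit (hunit k hk) (hunit _ (hsub_mem k hk)), ← Nat.cast_add,
      Nat.add_sub_cancel' (mem_Ico.1 hk).2.le]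
  have hmodp : castHom (dvd_mul_left p p) (ZMod p)
      (∑ k ∈ Ico 1 p, (k : ZMod (p * p))⁻¹ * ((p - k : ℕ) : ZMod (p * p))⁻¹) = 0 := by
    rw [map_sum, ← neg_eq_zero, ← sum_neg_distrib, ← sum_Ico_inv_natCast_sq_eq_zero h3]
    refine sum_congr rfl fun k hk => ?_
    rw [map_mul, map_inv_of_isUnit _ (hunit k hk),
      map_inv_of_isUnit _ (hunit _ (hsub_mem k hk)), map_natCast, map_natCast,
      Nat.cast_sub (mem_Ico.1 hk).2.le, natCast_self, zero_sub, inv_neg]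
    ring
  have htwo : 2 * ∑ k ∈ Ico 1 p, (k : ZMod (p * p))⁻¹ = 0 := by
    have hreflect_sum : ∑ k ∈ Ico 1 p, ((p - k : ℕ) : ZMod (p * p))⁻¹ =
        ∑ k ∈ Ico 1 p, (k : ZMod (p * p))⁻¹ := by
      simpa using sum_Ico_reflect (fun k : ℕ => (k : ZMod (p * p))⁻¹) 1 p.le_succ
    rw [two_mul]
    nth_rewrite 2 [← hreflect_sum]
    rw [← sum_add_distrib, sum_congr rfl hpair, ← mul_sum]
    exact natCast_mul_eq_zero_of_castHom_eq_zero hmodp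
  have h2 : IsUnit (2 : ZMod (p * p)) := by
    exact_mod_cast (isUnit_iff_coprime 2 _).2
      (coprime_mul_self_of_mem_Ico hp (mem_Ico.2 ⟨by norm_num, by omega⟩))
  exact h2.mul_right_eq_zero.1 htwo

end ZMod

theorem harmonic1_eq_sum_factorial_div (n : ℕ) :
    harmonic1 n = ((∑ k ∈ Icc 1 n, n ! / k : ℕ) : ℚ) / n ! := by
  rw [harmonic1, Nat.cast_sum, sum_div]
  refine sum_congr rfl fun k hk => ?_
  have hk0 : (k : ℚ) ≠ 0 := by have := (mem_Icc.1 hk).1; positivity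
  rw [Nat.cast_div (Nat.dvd_factorial (mem_Icc.1 hk).1 (mem_Icc.1 hk).2) hk0]
  field_simp

theorem le_padicValRat_div {p m a b : ℕ} [Fact p.Prime] (ha : a ≠ 0) (hb : ¬ p ∣ b)
    (h : p ^ m ∣ a) : (m : ℤ) ≤ padicValRat p (a / b) := by
  have hb0 : b ≠ 0 := by rintro rfl; exact hb (dvd_zero p)
  rw [padicValRat.div (by exact_mod_cast ha) (by exact_mod_cast hb0), padicValRat.of_nat,
    padicValRat.of_nat, padicValNat.eq_zero_of_not_dvd hb, Nat.cast_zero, sub_zero, Nat.cast_le]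
  exact (padicValNat_dvd_iff_le ha).1 h

theorem stmt10 (p : ℕ) (hp : p.Prime) (h3 : 3 < p) :
    (2 : ℤ) ≤ padicValRat p (harmonic1 (p - 1)) := by
  have := Fact.mk hp
  have hIcc : Icc 1 (p - 1) = Ico 1 p := by ext k; simp only [mem_Icc, mem_Ico]; omega
  have hnum : ((∑ k ∈ Icc 1 (p - 1), (p - 1)! / k : ℕ) : ZMod (p * p)) = 0 := by
    rw [Nat.cast_sum, hIcc, sum_congr rfl fun k hk => ZMod.natCast_div_eq_mul_inv
      (Nat.dvd_factorial (mem_Ico.1 hk).1 (by have := (mem_Ico.1 hk).2; omega))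
      (coprime_mul_self_of_mem_Ico hp hk), ← mul_sum, ZMod.sum_Ico_inv_natCast_eq_zero hp h3,
      mul_zero]
  have hnum_ne : ∑ k ∈ Icc 1 (p - 1), (p - 1)! / k ≠ 0 := fun h => by
    simpa [Nat.factorial_ne_zero] using sum_eq_zero_iff.1 h 1 (by simp; omega)
  rw [harmonic1_eq_sum_factorial_div]
  exact le_padicValRat_div hnum_ne (fun h => by have := hp.dvd_factorial.1 h; omega)
    (sq p ▸ (ZMod.natCast_eq_zero_iff _ _).1 hnum)
end

section
/- For every prime p > 7, the p-adic valuation of the rational number H_{p-1} + (p/2)·H_{p-1,2} + (p^2/6)·H_{p-1,3} is at least 6, where H_{p-1,s} = Σ_{k=1}^{p-1} 1/k^s. -/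
def harmonic3 (n : ℕ) : ℚ := ∑ j ∈ Finset.Icc 1 n, (1 : ℚ) / (j : ℚ) ^ 3

/-!
With `G k = 1/k + (p/2)/k² + (p²/6)/k³` one checks `G k + G (p - k) = p⁵ / (6 (k (p - k))³)`,
so pairing `k` with `p - k` gives `H_{p-1} + (p/2) H_{p-1,2} + (p²/6) H_{p-1,3} = (p⁵/12) T`
with `T = ∑ 1/(k (p - k))³`. Modulo `p` every term of `T` is `-k⁻⁶`, and `∑_{k=1}^{p-1} k⁻⁶ ≡ 0`
as soon as `p - 1 ∤ 6`, so `v_p(T) ≥ 1`; since `p ∤ 12` the whole expression has valuation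
at least `5 + 1`.
-/

open Finset

theorem Finset.sum_Icc_one_sub_reflect {M : Type*} [AddCommMonoid M] (f : ℕ → M) (n : ℕ) :
    ∑ k ∈ Icc 1 (n - 1), f (n - k) = ∑ k ∈ Icc 1 (n - 1), f k := by
  have hIcc : Icc 1 (n - 1) = Ico 1 n := by ext; simp only [mem_Icc, mem_Ico]; omega
  rw [hIcc, sum_Ico_reflect f 1 (Nat.le_succ n)]
  simp

theorem one_div_pow_combination_add_sub {K : Type*} [Field K] [CharZero K] {s x : K} (hx : x ≠ 0)
    (hsx : s - x ≠ 0) :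
    (1 / x + s / 2 * (1 / x ^ 2) + s ^ 2 / 6 * (1 / x ^ 3))
      + (1 / (s - x) + s / 2 * (1 / (s - x) ^ 2) + s ^ 2 / 6 * (1 / (s - x) ^ 3))
      = s ^ 5 / 6 * ((x * (s - x)) ^ 3)⁻¹ := by
  field_simp
  ring

theorem harmonic1_add_mul_harmonic2_add_mul_harmonic3 (n : ℕ) :
    harmonic1 (n - 1) + ((n : ℚ) / 2) * harmonic2 (n - 1) + ((n : ℚ) ^ 2 / 6) * harmonic3 (n - 1)
      = (n : ℚ) ^ 5 / 12 * ∑ k ∈ Icc 1 (n - 1), (((k : ℚ) * (n - k)) ^ 3)⁻¹ := by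
  set G : ℕ → ℚ := fun k =>
    1 / k + (n : ℚ) / 2 * (1 / (k : ℚ) ^ 2) + (n : ℚ) ^ 2 / 6 * (1 / (k : ℚ) ^ 3)
  have hG : harmonic1 (n - 1) + ((n : ℚ) / 2) * harmonic2 (n - 1)
      + ((n : ℚ) ^ 2 / 6) * harmonic3 (n - 1) = ∑ k ∈ Icc 1 (n - 1), G k := by
    simp only [harmonic1, harmonic2, harmonic3, mul_sum, G, sum_add_distrib]
  have hpair : ∀ k ∈ Icc 1 (n - 1),
      G k + G (n - k) = (n : ℚ) ^ 5 / 6 * (((k : ℚ) * (n - k)) ^ 3)⁻¹ := by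
    intro k hk
    obtain ⟨hk1, hkn⟩ := mem_Icc.1 hk
    simp only [G]
    rw [Nat.cast_sub (by omega)]
    exact one_div_pow_combination_add_sub (by norm_cast; omega)
      (by rw [← Nat.cast_sub (by omega)]; norm_cast; omega)
  calc _ = ∑ k ∈ Icc 1 (n - 1), G k := hG
    _ = (∑ k ∈ Icc 1 (n - 1), (G k + G (n - k))) / 2 := by
      rw [sum_add_distrib (f := G), sum_Icc_one_sub_reflect G n]; ring
    _ = _ := by rw [sum_congr rfl hpair, ← mul_sum]; ring

theorem Finset.prod_mul_sum_inv {ι F : Type*} [DecidableEq ι] [Field F] (s : Finset ι) {d : ι → F}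
    (hd : ∀ i ∈ s, d i ≠ 0) :
    (∏ i ∈ s, d i) * ∑ i ∈ s, (d i)⁻¹ = ∑ i ∈ s, ∏ j ∈ s.erase i, d j := by
  rw [mul_sum]
  refine sum_congr rfl fun i hi => ?_
  rw [← prod_erase_mul s d hi, mul_inv_cancel_right₀ (hd i hi)]

theorem one_le_padicValRat_sum_inv {ι : Type*} {p : ℕ} [Fact p.Prime] (s : Finset ι) (d : ι → ℤ)
    (hd : ∀ i ∈ s, (d i : ZMod p) ≠ 0) (hsum : ∑ i ∈ s, (d i : ZMod p)⁻¹ = 0)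
    (hne : ∑ i ∈ s, (d i : ℚ)⁻¹ ≠ 0) :
    1 ≤ padicValRat p (∑ i ∈ s, (d i : ℚ)⁻¹) := by
  classical
  set M : ℤ := ∏ i ∈ s, d i
  set N : ℤ := ∑ i ∈ s, ∏ j ∈ s.erase i, d j
  have hdQ : ∀ i ∈ s, (d i : ℚ) ≠ 0 := fun i hi h => hd i hi (by simp [Int.cast_eq_zero.1 h])
  have hMp : (M : ZMod p) ≠ 0 := by
    simpa only [M, Int.cast_prod] using prod_ne_zero_iff.2 hd
  have hNp : (N : ZMod p) = 0 := by
    simp only [N, Int.cast_sum, Int.cast_prod, ← s.prod_mul_sum_inv hd, hsum, mul_zero]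
  have hM0 : M ≠ 0 := by rintro h; simp [h] at hMp
  have hsumQ : ∑ i ∈ s, (d i : ℚ)⁻¹ = N / M := by
    rw [eq_div_iff (Int.cast_ne_zero.2 hM0), mul_comm]
    simp only [M, N, Int.cast_sum, Int.cast_prod, s.prod_mul_sum_inv hdQ]
  have hN0 : N ≠ 0 := by rintro h; simp [hsumQ, h] at hne
  have hvM : padicValInt p M = 0 :=
    padicValInt.eq_zero_of_not_dvd fun h => hMp ((ZMod.intCast_zmod_eq_zero_iff_dvd M p).2 h)
  have hvN : 1 ≤ padicValInt p N :=
    ((padicValInt_dvd_iff 1 N).1 (by simpa using (ZMod.intCast_zmod_eq_zero_iff_dvd N p).1 hNp))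
      |>.resolve_left hN0
  rw [hsumQ, padicValRat.div (Int.cast_ne_zero.2 hN0) (Int.cast_ne_zero.2 hM0),
    padicValRat.of_int, padicValRat.of_int, hvM, Nat.cast_zero, sub_zero]
  exact_mod_cast hvN

theorem ZMod.natCast_ne_zero_of_mem_Icc {n k : ℕ} (hk : k ∈ Icc 1 (n - 1)) : (k : ZMod n) ≠ 0 := by
  obtain ⟨hk1, hkn⟩ := mem_Icc.1 hk
  rw [Ne, ZMod.natCast_eq_zero_iff]
  exact Nat.not_dvd_of_pos_of_lt hk1 (by omega)

theorem ZMod.sum_Icc_inv_pow_eq_zero (p : ℕ) [Fact p.Prime] {m : ℕ} (hm0 : m ≠ 0)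
    (hm : m < p - 1) : ∑ k ∈ Icc 1 (p - 1), ((k : ZMod p)⁻¹) ^ m = 0 := by
  calc ∑ k ∈ Icc 1 (p - 1), ((k : ZMod p)⁻¹) ^ m
      = ∑ x ∈ univ.erase (0 : ZMod p), x⁻¹ ^ m := by
        refine sum_nbij' (fun k => (k : ZMod p)) ZMod.val ?_ ?_ ?_ ?_ fun _ _ => rfl
        · intro k hk
          exact mem_erase.2 ⟨ZMod.natCast_ne_zero_of_mem_Icc hk, mem_univ _⟩
        · intro x hx
          have := ZMod.val_lt x
          have := (ZMod.val_ne_zero x).2 (ne_of_mem_erase hx)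
          show x.val ∈ Icc 1 (p - 1)
          rw [mem_Icc]
          omega
        · intro k hk
          exact ZMod.val_cast_of_lt (by have := (mem_Icc.1 hk).2; omega)
        · intro x _
          exact ZMod.natCast_zmod_val x
    _ = ∑ x : ZMod p, x⁻¹ ^ m := sum_erase _ (by simp [hm0])
    _ = ∑ x : ZMod p, x ^ m := Fintype.sum_bijective _ inv_involutive.bijective _ _ fun _ => rfl
    _ = 0 := FiniteField.sum_pow_lt_card_sub_one _ _ (by rwa [ZMod.card])

theorem one_le_padicValRat_sum_inv_mul_sub_pow {p m : ℕ} [Fact p.Prime] (hm0 : m ≠ 0)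
    (hm : 2 * m < p - 1) (hne : ∑ k ∈ Icc 1 (p - 1), (((k : ℚ) * (p - k)) ^ m)⁻¹ ≠ 0) :
    1 ≤ padicValRat p (∑ k ∈ Icc 1 (p - 1), (((k : ℚ) * (p - k)) ^ m)⁻¹) := by
  set d : ℕ → ℤ := fun k => ((k : ℤ) * (p - k)) ^ m
  have hdQ : ∀ k : ℕ, ((k : ℚ) * (p - k)) ^ m = d k := by simp [d]
  have hdp : ∀ k : ℕ, (d k : ZMod p) = ((k : ZMod p) * -k) ^ m := by simp [d]
  simp only [hdQ] at hne ⊢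
  refine one_le_padicValRat_sum_inv _ d (fun k hk => ?_) ?_ hne
  · have hk0 := ZMod.natCast_ne_zero_of_mem_Icc hk
    rw [hdp]
    exact pow_ne_zero _ (mul_ne_zero hk0 (neg_ne_zero.2 hk0))
  · have hinv : ∀ k : ℕ, (d k : ZMod p)⁻¹ = (-1) ^ m * ((k : ZMod p)⁻¹) ^ (2 * m) := by
      intro k
      rw [hdp, mul_neg, neg_pow, ← sq, ← pow_mul, mul_inv, ← inv_pow, ← inv_pow, inv_neg, inv_one]
    rw [sum_congr rfl fun k _ => hinv k, ← mul_sum,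
      ZMod.sum_Icc_inv_pow_eq_zero p (by omega) hm, mul_zero]

theorem stmt13 (p : ℕ) (hp : p.Prime) (h7 : 7 < p) :
    harmonic1 (p - 1) + ((p : ℚ) / 2) * harmonic2 (p - 1)
        + ((p : ℚ) ^ 2 / 6) * harmonic3 (p - 1) = 0 ∨
      (6 : ℤ) ≤ padicValRat p
        (harmonic1 (p - 1) + ((p : ℚ) / 2) * harmonic2 (p - 1)
          + ((p : ℚ) ^ 2 / 6) * harmonic3 (p - 1)) := by
  have : Fact p.Prime := ⟨hp⟩
  have h12 : padicValRat p 12 = 0 := by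
    have hndvd : ¬ p ∣ 12 := fun h => by
      have := Nat.le_of_dvd (by norm_num) h
      interval_cases p <;> first | omega | norm_num at hp
    have h12' : padicValRat p ((12 : ℕ) : ℚ) = 0 := by
      rw [padicValRat.of_nat, padicValNat.eq_zero_of_not_dvd hndvd, Nat.cast_zero]
    exact_mod_cast h12'
  rw [harmonic1_add_mul_harmonic2_add_mul_harmonic3]
  set T := ∑ k ∈ Icc 1 (p - 1), (((k : ℚ) * (p - k)) ^ 3)⁻¹
  rcases eq_or_ne T 0 with hT | hT
  · left
    rw [hT, mul_zero]
  right
  have hvT : 1 ≤ padicValRat p T :=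
    one_le_padicValRat_sum_inv_mul_sub_pow (by norm_num) (by omega) hT
  have hp0 : (p : ℚ) ^ 5 ≠ 0 := pow_ne_zero 5 (Nat.cast_ne_zero.2 hp.ne_zero)
  rw [padicValRat.mul (div_ne_zero hp0 (by norm_num)) hT, padicValRat.div hp0 (by norm_num),
    padicValRat.pow, padicValRat.self hp.one_lt, h12]
  push_cast
  linarith
end

section
/- For every nonnegative integer n, if A_n ≡ 8j + 4i + 1 (mod 16) with i, j ∈ {0,1}, then β_n ≡ 2(i+j) + 1 (mod 4), where A_n = Σ_{k=0}^{n} C(n,k)^2·C(n+k,k)^2 and β_n = Σ_{k=0}^{n} C(n,k)^2·C(n+k,k). In particular, β_n ≡ 1 (mod 4) iff A_n ≡ 1 or 13 (mod 16), and β_n ≡ 3 (mod 4) iff A_n ≡ 5 or 9 (mod 16). -/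
def apheryA (n : ℕ) : ℕ :=
  ∑ k ∈ Finset.range (n + 1), (Nat.choose n k) ^ 2 * (Nat.choose (n + k) k) ^ 2

/-!
Since `C(n,k) C(n+k,k) = C(2k,k) C(n+k,2k)` and, by Kummer, the 2-adic valuation of `C(2k,k)` is
the binary digit sum of `k`, only `k = 0` and the powers `k = 2^a` contribute to `A_n` mod 16 and
to `β_n` mod 4, and for those `C(2k,k)` is twice an odd number. With
`x_a = C(n + 2^a, 2^(a+1)) mod 2` and `y_a = C(n, 2^a) x_a mod 2` this gives
`A_n ≡ 1 + 4 Σ x_a (mod 16)` and `β_n ≡ 1 + 2 Σ y_a (mod 4)`. By Lucas, `x_a` and `y_a` are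
read off the binary digits of `n`, and summing over the digits gives `Σ x_a + n mod 2 = 2 Σ y_a`,
which ties the two residues together.
-/

open Finset Nat

namespace Nat

theorem choose_mul_choose_add_eq_centralBinom_mul (n k : ℕ) :
    n.choose k * (n + k).choose k = k.centralBinom * (n + k).choose (2 * k) := by
  rcases le_or_gt k n with hk | hk
  · have h := choose_mul (n := n + k) (k := 2 * k) (s := k) (by omega)
    rw [show n + k - k = n by omega, show 2 * k - k = k by omega] at h
    rw [centralBinom_eq_two_mul_choose, mul_comm, ← h, mul_comm]
  · rw [choose_eq_zero_of_lt hk, choose_eq_zero_of_lt (by omega : n + k < 2 * k), zero_mul,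
      mul_zero]

theorem choose_prime_pow_modEq (p : ℕ) [Fact p.Prime] (b m : ℕ) :
    m.choose (p ^ b) ≡ m / p ^ b [MOD p] := by
  induction b generalizing m with
  | zero => simp [Nat.ModEq]
  | succ b ih =>
    have hp := (Fact.out : p.Prime).one_lt
    refine (Choose.choose_modEq_choose_mod_mul_choose_div_nat (p := p)).trans ?_
    rw [pow_succ', Nat.mul_mod_right, mul_div_cancel_left₀ _ (by omega), choose_zero_right,
      one_mul, ← Nat.div_div_eq_div_mul]
    exact ih (m / p)

theorem sum_digits_pos {b k : ℕ} (hk : k ≠ 0) : 0 < (digits b k).sum :=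
  (Nat.pos_of_ne_zero (getLast_digit_ne_zero b hk)).trans_le
    (List.le_sum_of_mem (List.getLast_mem _))

theorem two_le_sum_digits_two {k : ℕ} (hk0 : k ≠ 0) (hk : ∀ a, k ≠ 2 ^ a) :
    2 ≤ (digits 2 k).sum := by
  induction k using Nat.strong_induction_on with
  | _ k ih =>
    have hhalf : k / 2 ≠ 0 := fun h => hk 0 (by omega)
    rw [digits_def' (by norm_num) (by omega), List.sum_cons]
    rcases mod_two_eq_zero_or_one k with h | h
    · have := ih (k / 2) (by omega) hhalf fun a ha => hk (a + 1) (by rw [pow_succ]; omega)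
      omega
    · have := sum_digits_pos (b := 2) hhalf
      omega

theorem padicValNat_two_centralBinom (k : ℕ) :
    padicValNat 2 k.centralBinom = (digits 2 k).sum := by
  have h := sub_one_mul_padicValNat_choose_eq_sub_sum_digits' (p := 2) (n := k) (k := k)
  have hdouble : (digits 2 (k + k)).sum = (digits 2 k).sum := by
    rcases eq_or_ne k 0 with rfl | hk
    · rfl
    · rw [digits_def' (by norm_num) (by omega), List.sum_cons,
        show (k + k) % 2 = 0 by omega, show (k + k) / 2 = k by omega, zero_add]
  rw [centralBinom_eq_two_mul_choose, two_mul]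
  omega

theorem four_dvd_centralBinom {k : ℕ} (hk0 : k ≠ 0) (hk : ∀ a, k ≠ 2 ^ a) :
    4 ∣ k.centralBinom := by
  rw [show 4 = 2 ^ 2 by rfl, padicValNat_dvd_iff_le (centralBinom_ne_zero k),
    padicValNat_two_centralBinom]
  exact two_le_sum_digits_two hk0 hk

theorem exists_centralBinom_two_pow_eq_two_mul (a : ℕ) :
    ∃ u, (2 ^ a).centralBinom = 2 * u ∧ u % 2 = 1 := by
  have hval : padicValNat 2 (2 ^ a).centralBinom = 1 := by
    rw [padicValNat_two_centralBinom, ← mul_one (2 ^ a),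
      digits_base_pow_mul (by norm_num) one_pos]
    simp
  have h2 : 2 ^ 1 ∣ (2 ^ a).centralBinom := by
    rw [padicValNat_dvd_iff_le (centralBinom_ne_zero _), hval]
  have h4 : ¬ 2 ^ 2 ∣ (2 ^ a).centralBinom := by
    rw [padicValNat_dvd_iff_le (centralBinom_ne_zero _), hval]; norm_num
  exact ⟨(2 ^ a).centralBinom / 2, by omega, by omega⟩

end Nat

theorem Finset.sum_range_succ_eq_add_sum_two_pow {M : Type*} [AddCommMonoid M] (n : ℕ)
    (f : ℕ → M) (hlarge : ∀ k, n < k → f k = 0)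
    (hpow : ∀ k, k ≠ 0 → (∀ a, k ≠ 2 ^ a) → f k = 0) :
    ∑ k ∈ range (n + 1), f k = f 0 + ∑ a ∈ range n, f (2 ^ a) := by
  have h0 : 0 ∉ (range n).image (2 ^ ·) := by simp
  rw [← sum_image fun a _ b _ h => Nat.pow_right_injective le_rfl h, ← sum_insert h0]
  set S := insert 0 ((range n).image (2 ^ ·))
  calc ∑ k ∈ range (n + 1), f k = ∑ k ∈ range (n + 1) ∪ S, f k :=
        sum_subset subset_union_left fun k _ hk => hlarge k (by simpa using hk)
    _ = ∑ k ∈ S, f k := by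
      refine (sum_subset subset_union_right fun k _ hkS => ?_).symm
      by_cases hk : n < k
      · exact hlarge k hk
      refine hpow k (fun h => hkS (by simp [S, h])) fun a ha => hkS ?_
      have : a < n := (Nat.pow_lt_pow_iff_right (by norm_num)).1
        ((ha ▸ not_lt.1 hk).trans_lt n.lt_two_pow_self)
      exact ha ▸ mem_insert_of_mem (mem_image_of_mem _ (mem_range.2 this))

theorem sum_choose_two_pow_mod_two (n : ℕ) :
    (∑ a ∈ range n, (n + 2 ^ a).choose (2 ^ (a + 1)) % 2) + n % 2
      = 2 * ∑ a ∈ range n, n.choose (2 ^ a) * (n + 2 ^ a).choose (2 ^ (a + 1)) % 2 := by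
  have lucas (m b : ℕ) : m.choose (2 ^ b) % 2 = m / 2 ^ b % 2 :=
    Nat.choose_prime_pow_modEq 2 b m
  -- Lucas turns both binomials into bits of `q = n / 2 ^ a`.
  have step (a : ℕ) : (n + 2 ^ a).choose (2 ^ (a + 1)) % 2 + n / 2 ^ a % 2
      = 2 * (n.choose (2 ^ a) * (n + 2 ^ a).choose (2 ^ (a + 1)) % 2) + n / 2 ^ (a + 1) % 2 := by
    rw [Nat.mul_mod, lucas, lucas, pow_succ, ← Nat.div_div_eq_div_mul, ← Nat.div_div_eq_div_mul,
      Nat.add_div_right _ (by positivity)]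
    generalize n / 2 ^ a = q
    rcases mod_two_eq_zero_or_one q with h | h <;> rw [h] <;> omega
  have htele :
      ∑ a ∈ range n, n / 2 ^ a % 2 = ∑ a ∈ range n, n / 2 ^ (a + 1) % 2 + n % 2 := by
    have h1 := sum_range_succ (fun a => n / 2 ^ a % 2) n
    have h2 := sum_range_succ' (fun a => n / 2 ^ a % 2) n
    rw [Nat.div_eq_of_lt n.lt_two_pow_self] at h1
    simp only [pow_zero, Nat.div_one] at h2
    omega
  have := sum_congr rfl fun a (_ : a ∈ range n) => step a
  rw [sum_add_distrib, sum_add_distrib, ← mul_sum] at this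
  omega

theorem four_mul_sq_modEq (x : ℕ) : 4 * x ^ 2 ≡ 4 * (x % 2) [MOD 16] := by
  have h : x ^ 2 % 4 = x % 2 := by
    rw [Nat.pow_mod, ← Nat.mod_mod_of_dvd x (by norm_num : 2 ∣ 4)]
    have := Nat.mod_lt x (show 0 < 4 by norm_num)
    interval_cases x % 4 <;> rfl
  unfold Nat.ModEq
  omega

section Summands

variable (n : ℕ) {k : ℕ}

theorem sixteen_dvd_apheryA_summand (hk0 : k ≠ 0) (hk : ∀ a, k ≠ 2 ^ a) :
    16 ∣ n.choose k ^ 2 * (n + k).choose k ^ 2 := by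
  rw [← mul_pow, choose_mul_choose_add_eq_centralBinom_mul]
  exact pow_dvd_pow_of_dvd ((four_dvd_centralBinom hk0 hk).mul_right _) 2

theorem four_dvd_apheryBeta_summand (hk0 : k ≠ 0) (hk : ∀ a, k ≠ 2 ^ a) :
    4 ∣ n.choose k ^ 2 * (n + k).choose k := by
  rw [sq, mul_assoc, choose_mul_choose_add_eq_centralBinom_mul]
  exact ((four_dvd_centralBinom hk0 hk).mul_right _).mul_left _

theorem apheryA_summand_two_pow_modEq (a : ℕ) :
    n.choose (2 ^ a) ^ 2 * (n + 2 ^ a).choose (2 ^ a) ^ 2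
      ≡ 4 * ((n + 2 ^ a).choose (2 ^ (a + 1)) % 2) [MOD 16] := by
  obtain ⟨u, hu, hodd⟩ := exists_centralBinom_two_pow_eq_two_mul a
  set w := (n + 2 ^ a).choose (2 ^ (a + 1))
  calc n.choose (2 ^ a) ^ 2 * (n + 2 ^ a).choose (2 ^ a) ^ 2 = 4 * (u * w) ^ 2 := by
        rw [← mul_pow, choose_mul_choose_add_eq_centralBinom_mul, hu, ← pow_succ']; ring
    _ ≡ 4 * (u * w % 2) [MOD 16] := four_mul_sq_modEq _
    _ = 4 * (w % 2) := by rw [Nat.mul_mod, hodd, one_mul, Nat.mod_mod]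

theorem apheryBeta_summand_two_pow_modEq (a : ℕ) :
    n.choose (2 ^ a) ^ 2 * (n + 2 ^ a).choose (2 ^ a)
      ≡ 2 * (n.choose (2 ^ a) * (n + 2 ^ a).choose (2 ^ (a + 1)) % 2) [MOD 4] := by
  obtain ⟨u, hu, hodd⟩ := exists_centralBinom_two_pow_eq_two_mul a
  set v := n.choose (2 ^ a) * (n + 2 ^ a).choose (2 ^ (a + 1))
  calc n.choose (2 ^ a) ^ 2 * (n + 2 ^ a).choose (2 ^ a) = 2 * (u * v) := by
        rw [sq, mul_assoc, choose_mul_choose_add_eq_centralBinom_mul, hu, ← pow_succ']; ring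
    _ ≡ 2 * (u * v % 2) [MOD 4] := by unfold Nat.ModEq; omega
    _ = 2 * (v % 2) := by rw [Nat.mul_mod, hodd, one_mul, Nat.mod_mod]

end Summands

theorem apheryA_modEq (n : ℕ) :
    apheryA n ≡ 1 + 4 * ∑ a ∈ range n, (n + 2 ^ a).choose (2 ^ (a + 1)) % 2 [MOD 16] := by
  rw [← ZMod.natCast_eq_natCast_iff, apheryA, Nat.cast_sum, sum_range_succ_eq_add_sum_two_pow]
  · push_cast [mul_sum]
    simp only [choose_zero_right, cast_one, one_pow, add_zero, mul_one, add_right_inj]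
    refine sum_congr rfl fun a _ => ?_
    exact_mod_cast (ZMod.natCast_eq_natCast_iff _ _ _).2 (apheryA_summand_two_pow_modEq n a)
  · intro k hk
    simp [choose_eq_zero_of_lt hk]
  · intro k hk0 hk
    exact (ZMod.natCast_eq_zero_iff _ _).2 (sixteen_dvd_apheryA_summand n hk0 hk)

theorem apheryBeta_modEq (n : ℕ) :
    apheryBeta n ≡ 1 + 2 * ∑ a ∈ range n,
      n.choose (2 ^ a) * (n + 2 ^ a).choose (2 ^ (a + 1)) % 2 [MOD 4] := by
  rw [← ZMod.natCast_eq_natCast_iff, apheryBeta, Nat.cast_sum, sum_range_succ_eq_add_sum_two_pow]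
  · push_cast [mul_sum]
    simp only [choose_zero_right, cast_one, one_pow, add_zero, mul_one, add_right_inj]
    refine sum_congr rfl fun a _ => ?_
    exact_mod_cast (ZMod.natCast_eq_natCast_iff _ _ _).2 (apheryBeta_summand_two_pow_modEq n a)
  · intro k hk
    simp [choose_eq_zero_of_lt hk]
  · intro k hk0 hk
    exact (ZMod.natCast_eq_zero_iff _ _).2 (four_dvd_apheryBeta_summand n hk0 hk)

theorem stmt19 (n : ℕ) (i j : ℕ) (hi : i ≤ 1) (hj : j ≤ 1)
    (h : apheryA n ≡ 8 * j + 4 * i + 1 [MOD 16]) :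
    apheryBeta n ≡ 2 * (i + j) + 1 [MOD 4] := by
  have hA := apheryA_modEq n
  have hB := apheryBeta_modEq n
  have hbits := sum_choose_two_pow_mod_two n
  unfold Nat.ModEq at *
  omega
end
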